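/- arXiv:1404.2182 — 3 statements merged into one kernel-verified Lean document; each statement's English description precedes it below -/
import Mathlib

section
/- Let θ ∈ [0,1), α ∈ (0,1), let a < b be real numbers, let f ∈ C^α([a,b]) and let ψ_a, ψ_b be positive real numbers. Let S be the set of functions v ∈ C²([a,b]) with v″ > 0 on [a,b], v(a) = v(b) = 0, (v″(a))^{θ−1} = ψ_a and (v″(b))^{θ−1} = ψ_b, and define L(v) = ∫_a^b f v dx + ψ_b v′(b) − ψ_a v′(a). Then the following are equivalent: (i) there exists u ∈ C^{4,α}([a,b]) with u″ > 0 on [a,b] such that ((u″)^{θ−1})″ = f on (a,b), u(a) = u(b) = 0, (u″(a))^{θ−1} = ψ_a and (u″(b))^{θ−1} = ψ_b; (ii) there exist λ > 0 and a constant C such that L(v) ≥ λ(v′(b) − v′(a)) − C for all v ∈ S. -/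
/-!
Put `W = (u'')^(θ-1)`. Two integrations by parts give `L v = ∫ W v''` whenever `W'' = f`,
`W a = ψa`, `W b = ψb` and `v a = v b = 0`, while `v' b - v' a = ∫ v''`; so `L` is proper with
`lam = min W`. Conversely, let `W` solve the linear two-point problem `W'' = f`, `W a = ψa`,
`W b = ψb`. Testing properness with `v'' = g₀ + M φ`, where `φ ≥ 0` lives where `W < lam`, and
letting `M → ∞` shows `W ≥ lam > 0` on `(a,b)`. Then `u` with `u'' = W ^ (θ-1)⁻¹` and
`u a = u b = 0` solves the problem, and `u'''' = (W ^ (θ-1)⁻¹)''` is a sum of products of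
`W'' = f` and `C¹` functions, hence `α`-Hölder.
-/

open scoped Topology NNReal
open Set Filter

noncomputable section

/-- The class `S` of admissible functions: `C²` on `[a,b]`, with `v'' > 0`,
`v(a) = v(b) = 0`, `(v''(a))^{θ-1} = ψa` and `(v''(b))^{θ-1} = ψb`. -/
def admissible1d (θ a b ψa ψb : ℝ) (v : ℝ → ℝ) : Prop :=
  ContDiffOn ℝ 2 v (Icc a b) ∧
    (∀ x ∈ Icc a b, 0 < iteratedDerivWithin 2 v (Icc a b) x) ∧
    v a = 0 ∧ v b = 0 ∧
    (iteratedDerivWithin 2 v (Icc a b) a) ^ (θ - 1) = ψa ∧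
    (iteratedDerivWithin 2 v (Icc a b) b) ^ (θ - 1) = ψb

/-- The functional `L(v) = ∫_a^b f v dx + ψb v'(b) − ψa v'(a)`. -/
def Lfunc1d (f : ℝ → ℝ) (a b ψa ψb : ℝ) (v : ℝ → ℝ) : ℝ :=
  (∫ x in a..b, f x * v x) + ψb * derivWithin v (Icc a b) b -
    ψa * derivWithin v (Icc a b) a

open MeasureTheory

section Holder

variable {X : Type*} [PseudoMetricSpace X] {r : ℝ≥0} {A : Set X}

theorem HolderOnWith.congr {Y : Type*} [PseudoEMetricSpace Y] {C : ℝ≥0} {f g : X → Y}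
    (hf : HolderOnWith C r f A) (hfg : EqOn f g A) : HolderOnWith C r g A :=
  fun x hx y hy => by rw [← hfg hx, ← hfg hy]; exact hf x hx y hy

theorem holderOnWith_of_dist_le {Y : Type*} [PseudoMetricSpace Y] {C : ℝ≥0} {f : X → Y}
    (h : ∀ x ∈ A, ∀ y ∈ A, dist (f x) (f y) ≤ C * dist x y ^ (r : ℝ)) :
    HolderOnWith C r f A := by
  intro x hx y hy
  rw [edist_nndist, edist_nndist, ← ENNReal.coe_rpow_of_nonneg _ r.coe_nonneg,
    ← ENNReal.coe_mul, ENNReal.coe_le_coe, ← NNReal.coe_le_coe]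
  simpa [← dist_nndist] using h x hx y hy

theorem HolderOnWith.add {Y : Type*} [SeminormedAddCommGroup Y] {C C' : ℝ≥0} {f g : X → Y}
    (hf : HolderOnWith C r f A) (hg : HolderOnWith C' r g A) :
    HolderOnWith (C + C') r (f + g) A := by
  rw [← HolderWith.restrict_iff] at *
  exact hf.add hg

theorem HolderOnWith.isBounded_image {Y : Type*} [PseudoMetricSpace Y] {C : ℝ≥0} {f : X → Y}
    (hf : HolderOnWith C r f A) (hA : Bornology.IsBounded A) :
    Bornology.IsBounded (f '' A) := by
  rw [Metric.isBounded_iff_ediam_ne_top] at *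
  refine ne_top_of_le_ne_top ?_ hf.ediam_image_le
  exact ENNReal.mul_ne_top ENNReal.coe_ne_top
    (ENNReal.rpow_ne_top_of_nonneg r.coe_nonneg hA)

theorem HolderOnWith.mul_of_abs_le {f g : X → ℝ} {C C' M M' : ℝ≥0} (hf : HolderOnWith C r f A)
    (hg : HolderOnWith C' r g A) (hfM : ∀ x ∈ A, |f x| ≤ M) (hgM : ∀ x ∈ A, |g x| ≤ M') :
    HolderOnWith (M * C' + M' * C) r (f * g) A := by
  refine holderOnWith_of_dist_le fun x hx y hy => ?_
  have hfd := hf.dist_le hx hy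
  have hgd := hg.dist_le hx hy
  rw [Real.dist_eq] at hfd hgd ⊢
  calc |f x * g x - f y * g y| = |f x * (g x - g y) + g y * (f x - f y)| := by ring_nf
    _ ≤ |f x| * |g x - g y| + |g y| * |f x - f y| := by
        rw [← abs_mul, ← abs_mul]; exact abs_add_le _ _
    _ ≤ M * (C' * dist x y ^ (r : ℝ)) + M' * (C * dist x y ^ (r : ℝ)) := by
        gcongr
        exacts [hfM x hx, hgM y hy]
    _ = ↑(M * C' + M' * C) * dist x y ^ (r : ℝ) := by push_cast; ring

theorem exists_holderOnWith_mul {f g : X → ℝ} (hA : Bornology.IsBounded A)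
    (hf : ∃ C, HolderOnWith C r f A) (hg : ∃ C, HolderOnWith C r g A) :
    ∃ C, HolderOnWith C r (f * g) A := by
  obtain ⟨C, hf⟩ := hf
  obtain ⟨C', hg⟩ := hg
  obtain ⟨M, hM0, hM⟩ := (HolderOnWith.isBounded_image hf hA).exists_pos_norm_le
  obtain ⟨M', hM'0, hM'⟩ := (HolderOnWith.isBounded_image hg hA).exists_pos_norm_le
  exact ⟨_, HolderOnWith.mul_of_abs_le (M := ⟨M, hM0.le⟩) (M' := ⟨M', hM'0.le⟩) hf hg
    (fun x hx => hM _ ⟨x, hx, rfl⟩) fun x hx => hM' _ ⟨x, hx, rfl⟩⟩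

end Holder

theorem ContDiffOn.exists_holderOnWith {E F : Type*} [NormedAddCommGroup E] [NormedSpace ℝ E]
    [NormedAddCommGroup F] [NormedSpace ℝ F] {f : E → F} {s : Set E} {r : ℝ≥0}
    (hf : ContDiffOn ℝ 1 f s) (hs : Convex ℝ s) (hs' : IsCompact s) (hr : r ≤ 1) :
    ∃ C, HolderOnWith C r f s := by
  obtain ⟨K, hK⟩ := hf.exists_lipschitzOnWith one_ne_zero hs hs'
  exact HolderOnWith.exists_holderOnWith_of_le ⟨K, holderOnWith_one.mpr hK⟩ hr hs'.isBounded

section Calculus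

variable {a b : ℝ} {s : Set ℝ} {f v W : ℝ → ℝ}

theorem iteratedDerivWithin_two_eq_derivWithin_derivWithin :
    iteratedDerivWithin 2 f s = derivWithin (derivWithin f s) s := by
  rw [iteratedDerivWithin_succ, iteratedDerivWithin_one]

theorem iteratedDerivWithin_iteratedDerivWithin (m n : ℕ) :
    iteratedDerivWithin m (iteratedDerivWithin n f s) s = iteratedDerivWithin (m + n) f s := by
  induction m with
  | zero => simp
  | succ m ih => rw [Nat.add_right_comm, iteratedDerivWithin_succ, ih, iteratedDerivWithin_succ]

theorem ContDiffOn.hasDerivWithinAt_derivWithin (hf : ContDiffOn ℝ 2 f s) (hs : UniqueDiffOn ℝ s)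
    {x : ℝ} (hx : x ∈ s) :
    HasDerivWithinAt (derivWithin f s) (iteratedDerivWithin 2 f s x) s x := by
  rw [iteratedDerivWithin_two_eq_derivWithin_derivWithin]
  exact ((hf.derivWithin hs (m := 1) le_rfl).differentiableOn one_ne_zero x hx).hasDerivWithinAt

theorem ContDiffOn.iteratedDerivWithin_two {m n : WithTop ℕ∞} (hf : ContDiffOn ℝ m f s)
    (hs : UniqueDiffOn ℝ s) (hmn : n + 2 ≤ m) : ContDiffOn ℝ n (iteratedDerivWithin 2 f s) s := by
  rw [iteratedDerivWithin_two_eq_derivWithin_derivWithin]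
  exact ((hf.of_le hmn).derivWithin hs (m := n + 1) (by rw [add_assoc, one_add_one_eq_two])
    ).derivWithin hs le_rfl

theorem ContDiffOn.of_iteratedDerivWithin_two {n : ℕ} (hs : UniqueDiffOn ℝ s)
    (hf : ContDiffOn ℝ 2 f s) (hn : ContDiffOn ℝ n (iteratedDerivWithin 2 f s) s) :
    ContDiffOn ℝ (n + 2) f s := by
  rw [show (n + 2 : WithTop ℕ∞) = n + 1 + 1 by rw [add_assoc]; norm_num,
    contDiffOn_succ_iff_derivWithin hs, contDiffOn_succ_iff_derivWithin hs,
    ← iteratedDerivWithin_two_eq_derivWithin_derivWithin]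
  refine ⟨hf.differentiableOn two_ne_zero, by simp, ?_, by simp, hn⟩
  exact (hf.derivWithin hs (m := 1) le_rfl).differentiableOn one_ne_zero

theorem integral_iteratedDerivWithin_two (hab : a < b) (hv : ContDiffOn ℝ 2 v (Icc a b)) :
    ∫ x in a..b, iteratedDerivWithin 2 v (Icc a b) x =
      derivWithin v (Icc a b) b - derivWithin v (Icc a b) a := by
  have hs := uniqueDiffOn_Icc hab
  refine intervalIntegral.integral_eq_sub_of_hasDerivAt_of_le hab.le
    (hv.continuousOn_derivWithin hs one_le_two) (fun x hx => ?_)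
    ((hv.continuousOn_iteratedDerivWithin le_rfl hs).intervalIntegrable_of_Icc hab.le)
  exact (hv.hasDerivWithinAt_derivWithin hs (Ioo_subset_Icc_self hx)).hasDerivAt
    (Icc_mem_nhds hx.1 hx.2)

theorem integral_iteratedDerivWithin_two_mul_sub_mul (hab : a < b) (hW : ContDiffOn ℝ 2 W (Icc a b))
    (hv : ContDiffOn ℝ 2 v (Icc a b)) :
    ∫ x in a..b, (iteratedDerivWithin 2 W (Icc a b) x * v x -
        W x * iteratedDerivWithin 2 v (Icc a b) x) =
      (derivWithin W (Icc a b) b * v b - W b * derivWithin v (Icc a b) b) -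
        (derivWithin W (Icc a b) a * v a - W a * derivWithin v (Icc a b) a) := by
  have hs := uniqueDiffOn_Icc hab
  refine intervalIntegral.integral_eq_sub_of_hasDerivAt_of_le hab.le
    (((hW.continuousOn_derivWithin hs one_le_two).mul hv.continuousOn).sub
      (hW.continuousOn.mul (hv.continuousOn_derivWithin hs one_le_two))) (fun x hx => ?_)
    ((((hW.continuousOn_iteratedDerivWithin le_rfl hs).mul hv.continuousOn).sub
      (hW.continuousOn.mul (hv.continuousOn_iteratedDerivWithin le_rfl hs))
      ).intervalIntegrable_of_Icc hab.le)
  have hx' := Ioo_subset_Icc_self hx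
  have hIcc : Icc a b ∈ 𝓝 x := Icc_mem_nhds hx.1 hx.2
  have hd : ∀ {g : ℝ → ℝ}, ContDiffOn ℝ 2 g (Icc a b) →
      HasDerivAt g (derivWithin g (Icc a b) x) x := fun hg =>
    ((hg.differentiableOn two_ne_zero x hx').hasDerivWithinAt).hasDerivAt hIcc
  have hd2 : ∀ {g : ℝ → ℝ}, ContDiffOn ℝ 2 g (Icc a b) →
      HasDerivAt (derivWithin g (Icc a b)) (iteratedDerivWithin 2 g (Icc a b) x) x := fun hg =>
    (hg.hasDerivWithinAt_derivWithin hs hx').hasDerivAt hIcc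
  convert ((hd2 hW).mul (hd hv)).sub ((hd hW).mul (hd2 hv)) using 1
  ring

end Calculus

section Dirichlet

variable {a b : ℝ} {g : ℝ → ℝ}

theorem contDiff_succ_of_hasDerivAt {n : ℕ} {F F' : ℝ → ℝ} (hF : ∀ x, HasDerivAt F (F' x) x)
    (hF' : ContDiff ℝ n F') : ContDiff ℝ (n + 1) F := by
  rw [contDiff_succ_iff_deriv]
  refine ⟨fun x => (hF x).differentiableAt, by simp, ?_⟩
  rwa [funext fun x => (hF x).deriv]

theorem exists_iteratedDerivWithin_two_eq (hab : a < b) (hg : ContinuousOn g (Icc a b))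
    (A B : ℝ) :
    ∃ y : ℝ → ℝ, ContDiffOn ℝ 2 y (Icc a b) ∧
      (∀ x ∈ Icc a b, iteratedDerivWithin 2 y (Icc a b) x = g x) ∧ y a = A ∧ y b = B := by
  set G := IccExtend hab.le ((Icc a b).domRestrict g)
  have hG : Continuous G := continuous_IccExtend_iff.mpr hg.domRestrict
  set Q : ℝ → ℝ := fun x => ∫ t in a..x, G t
  set P : ℝ → ℝ := fun x => ∫ t in a..x, Q t
  have hQ : ∀ x, HasDerivAt Q (G x) x := fun x => hG.integral_hasStrictDerivAt a x |>.hasDerivAt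
  have hQc : Continuous Q := continuous_iff_continuousAt.mpr fun x => (hQ x).continuousAt
  have hP : ∀ x, HasDerivAt P (Q x) x := fun x => hQc.integral_hasStrictDerivAt a x |>.hasDerivAt
  set c := (B - A - P b) / (b - a)
  have hy : ∀ x, HasDerivAt (fun x => P x + A + c * (x - a)) (Q x + c) x := fun x =>
    (((hP x).add_const A).add (((hasDerivAt_id' x).sub_const a).const_mul c)).congr_deriv
      (by ring)
  have hy' : ∀ x, HasDerivAt (fun x => Q x + c) (G x) x := fun x => (hQ x).add_const c
  have hs := uniqueDiffOn_Icc hab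
  refine ⟨fun x => P x + A + c * (x - a), ?_, fun x hx => ?_, by simp [P], ?_⟩
  · exact (contDiff_succ_of_hasDerivAt (n := 1) hy
      (contDiff_succ_of_hasDerivAt (n := 0) hy' (contDiff_zero.mpr hG))).contDiffOn
  · have hd : EqOn (derivWithin (fun x => P x + A + c * (x - a)) (Icc a b))
        (fun x => Q x + c) (Icc a b) := fun z hz => (hy z).hasDerivWithinAt.derivWithin (hs z hz)
    rw [iteratedDerivWithin_two_eq_derivWithin_derivWithin, derivWithin_congr hd (hd hx),
      (hy' x).hasDerivWithinAt.derivWithin (hs x hx)]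
    exact IccExtend_of_mem _ _ hx
  · simp only [c]
    field_simp [(sub_pos.mpr hab).ne']
    ring

end Dirichlet

theorem le_of_forall_integral_sub_mul_le {a b A B lam C : ℝ} {W : ℝ → ℝ} (hab : a < b)
    (hW : ContinuousOn W (Icc a b)) (hA : 0 < A) (hB : 0 < B)
    (h : ∀ g : ℝ → ℝ, ContinuousOn g (Icc a b) → (∀ x ∈ Icc a b, 0 < g x) → g a = A → g b = B →
      ∫ x in a..b, (lam - W x) * g x ≤ C) :
    ∀ x ∈ Ioo a b, lam ≤ W x := by
  intro x₀ hx₀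
  by_contra! hlt
  set g₀ : ℝ → ℝ := fun x => (A * (b - x) + B * (x - a)) / (b - a)
  set φ : ℝ → ℝ := fun x => max 0 (lam - W x) * ((x - a) * (b - x))
  have hg₀ : ContinuousOn g₀ (Icc a b) := by fun_prop
  have hφ : ContinuousOn φ (Icc a b) := by fun_prop
  have hg₀pos : ∀ x ∈ Icc a b, 0 < g₀ x := fun x hx => by
    have := hx.1; have := hx.2
    exact div_pos (by nlinarith [min_le_left A B, min_le_right A B, lt_min hA hB])
      (sub_pos.mpr hab)
  have hφnonneg : ∀ x ∈ Icc a b, 0 ≤ φ x := fun x hx =>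
    mul_nonneg (le_max_left _ _) (mul_nonneg (sub_nonneg.mpr hx.1) (sub_nonneg.mpr hx.2))
  have hpos : 0 < ∫ x in a..b, (lam - W x) * φ x := by
    refine intervalIntegral.integral_pos hab ((continuousOn_const.sub hW).mul hφ)
      (fun x hx => ?_) ⟨x₀, Ioo_subset_Icc_self hx₀, ?_⟩
    · rcases le_total (lam - W x) 0 with hle | hge
      · simp [φ, max_eq_left hle]
      · exact mul_nonneg hge (hφnonneg x (Ioc_subset_Icc_self hx))
    · have := sub_pos.mpr hlt
      simp only [φ, max_eq_right this.le]
      have := sub_pos.mpr hx₀.1; have := sub_pos.mpr hx₀.2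
      positivity
  set I₀ := ∫ x in a..b, (lam - W x) * g₀ x
  set I := ∫ x in a..b, (lam - W x) * φ x
  have htest : ∀ M : ℝ, 0 ≤ M → I₀ + M * I ≤ C := fun M hM => by
    have hsplit : ∫ x in a..b, (lam - W x) * (g₀ x + M * φ x) = I₀ + M * I := by
      simp_rw [mul_add, mul_left_comm _ M]
      rw [intervalIntegral.integral_add, intervalIntegral.integral_const_mul]
      · exact ((continuousOn_const.sub hW).mul hg₀).intervalIntegrable_of_Icc hab.le
      · exact (((continuousOn_const.sub hW).mul hφ).intervalIntegrable_of_Icc hab.le).const_mul M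
    rw [← hsplit]
    refine h _ (hg₀.add (continuousOn_const.mul hφ))
      (fun x hx => add_pos_of_pos_of_nonneg (hg₀pos x hx) (mul_nonneg hM (hφnonneg x hx)))
      ?_ ?_
    · simp [g₀, φ, (sub_pos.mpr hab).ne']
    · simp [g₀, φ, (sub_pos.mpr hab).ne']
  have := htest ((|C - I₀| + 1) / I) (by positivity)
  rw [div_mul_cancel₀ _ hpos.ne'] at this
  linarith [le_abs_self (C - I₀)]

section Functional

variable {a b θ ψa ψb : ℝ} {f W v : ℝ → ℝ}

theorem Lfunc1d_eq_integral_mul_iteratedDerivWithin (hab : a < b)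
    (hW : ContDiffOn ℝ 2 W (Icc a b))
    (hWf : ∀ x ∈ Ioo a b, iteratedDerivWithin 2 W (Icc a b) x = f x)
    (hWa : W a = ψa) (hWb : W b = ψb) (hv : ContDiffOn ℝ 2 v (Icc a b))
    (hva : v a = 0) (hvb : v b = 0) :
    Lfunc1d f a b ψa ψb v = ∫ x in a..b, W x * iteratedDerivWithin 2 v (Icc a b) x := by
  have hs := uniqueDiffOn_Icc hab
  have hfv : ∫ x in a..b, f x * v x =
      ∫ x in a..b, iteratedDerivWithin 2 W (Icc a b) x * v x := by
    simp only [intervalIntegral.integral_of_le hab.le, integral_Ioc_eq_integral_Ioo]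
    exact setIntegral_congr_fun measurableSet_Ioo fun x hx => by rw [hWf x hx]
  have hi1 : IntervalIntegrable (fun x => iteratedDerivWithin 2 W (Icc a b) x * v x) volume a b :=
    ((hW.continuousOn_iteratedDerivWithin le_rfl hs).mul hv.continuousOn).intervalIntegrable_of_Icc
      hab.le
  have hi2 : IntervalIntegrable (fun x => W x * iteratedDerivWithin 2 v (Icc a b) x) volume a b :=
    (hW.continuousOn.mul (hv.continuousOn_iteratedDerivWithin le_rfl hs)).intervalIntegrable_of_Icc
      hab.le
  have hgreen := integral_iteratedDerivWithin_two_mul_sub_mul hab hW hv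
  rw [intervalIntegral.integral_sub hi1 hi2, hva, hvb, hWa, hWb] at hgreen
  rw [Lfunc1d, hfv]
  linarith

theorem mul_sub_le_Lfunc1d (hab : a < b) (hW : ContDiffOn ℝ 2 W (Icc a b))
    (hWf : ∀ x ∈ Ioo a b, iteratedDerivWithin 2 W (Icc a b) x = f x)
    (hWa : W a = ψa) (hWb : W b = ψb) (hv : ContDiffOn ℝ 2 v (Icc a b))
    (hva : v a = 0) (hvb : v b = 0) {m : ℝ} (hm : ∀ x ∈ Icc a b, m ≤ W x)
    (hv2 : ∀ x ∈ Icc a b, 0 ≤ iteratedDerivWithin 2 v (Icc a b) x) :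
    m * (derivWithin v (Icc a b) b - derivWithin v (Icc a b) a) ≤ Lfunc1d f a b ψa ψb v := by
  have hv2c := hv.continuousOn_iteratedDerivWithin le_rfl (uniqueDiffOn_Icc hab)
  rw [Lfunc1d_eq_integral_mul_iteratedDerivWithin hab hW hWf hWa hWb hv hva hvb,
    ← integral_iteratedDerivWithin_two hab hv, ← intervalIntegral.integral_const_mul]
  exact intervalIntegral.integral_mono_on hab.le
    ((continuousOn_const.mul hv2c).intervalIntegrable_of_Icc hab.le)
    ((hW.continuousOn.mul hv2c).intervalIntegrable_of_Icc hab.le)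
    fun x hx => mul_le_mul_of_nonneg_right (hm x hx) (hv2 x hx)

theorem integral_sub_mul_le_of_proper (hab : a < b) (hW : ContDiffOn ℝ 2 W (Icc a b))
    (hWf : ∀ x ∈ Ioo a b, iteratedDerivWithin 2 W (Icc a b) x = f x)
    (hWa : W a = ψa) (hWb : W b = ψb) {lam C : ℝ}
    (hprop : ∀ v : ℝ → ℝ, admissible1d θ a b ψa ψb v →
      Lfunc1d f a b ψa ψb v ≥ lam * (derivWithin v (Icc a b) b - derivWithin v (Icc a b) a) - C)
    {g : ℝ → ℝ} (hg : ContinuousOn g (Icc a b)) (hgpos : ∀ x ∈ Icc a b, 0 < g x)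
    (hga : g a ^ (θ - 1) = ψa) (hgb : g b ^ (θ - 1) = ψb) :
    ∫ x in a..b, (lam - W x) * g x ≤ C := by
  obtain ⟨v, hv, hv2, hva, hvb⟩ := exists_iteratedDerivWithin_two_eq hab hg 0 0
  have hv2' : EqOn (iteratedDerivWithin 2 v (Icc a b)) g (uIcc a b) := by
    rwa [uIcc_of_le hab.le]
  have hadm : admissible1d θ a b ψa ψb v :=
    ⟨hv, fun x hx => hv2 x hx ▸ hgpos x hx, hva, hvb, by rwa [hv2 a (left_mem_Icc.mpr hab.le)],
      by rwa [hv2 b (right_mem_Icc.mpr hab.le)]⟩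
  have hL : Lfunc1d f a b ψa ψb v = ∫ x in a..b, W x * g x := by
    rw [Lfunc1d_eq_integral_mul_iteratedDerivWithin hab hW hWf hWa hWb hv hva hvb]
    exact intervalIntegral.integral_congr fun x hx => by rw [hv2' hx]
  have hdv : derivWithin v (Icc a b) b - derivWithin v (Icc a b) a = ∫ x in a..b, g x := by
    rw [← integral_iteratedDerivWithin_two hab hv]
    exact intervalIntegral.integral_congr hv2'
  have hsplit : ∫ x in a..b, (lam - W x) * g x =
      lam * (∫ x in a..b, g x) - ∫ x in a..b, W x * g x := by
    have hi : IntervalIntegrable (fun x => W x * g x) volume a b :=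
      (hW.continuousOn.mul hg).intervalIntegrable_of_Icc hab.le
    simp_rw [sub_mul]
    rw [intervalIntegral.integral_sub ((hg.intervalIntegrable_of_Icc hab.le).const_mul lam) hi,
      intervalIntegral.integral_const_mul]
  have := hprop v hadm
  rw [hL, hdv] at this
  linarith

theorem exists_forall_Lfunc1d_ge_of_pos (hab : a < b) (hW : ContDiffOn ℝ 2 W (Icc a b))
    (hWf : ∀ x ∈ Ioo a b, iteratedDerivWithin 2 W (Icc a b) x = f x)
    (hWa : W a = ψa) (hWb : W b = ψb) (hpos : ∀ x ∈ Icc a b, 0 < W x) :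
    ∃ lam > (0:ℝ), ∃ C : ℝ, ∀ v : ℝ → ℝ, admissible1d θ a b ψa ψb v →
      Lfunc1d f a b ψa ψb v ≥
        lam * (derivWithin v (Icc a b) b - derivWithin v (Icc a b) a) - C := by
  obtain ⟨x₀, hx₀, hmin⟩ :=
    isCompact_Icc.exists_isMinOn (nonempty_Icc.mpr hab.le) hW.continuousOn
  refine ⟨W x₀, hpos x₀ hx₀, 0, fun v ⟨hv, hv₂, hva, hvb, _⟩ => ?_⟩
  rw [sub_zero]
  exact mul_sub_le_Lfunc1d hab hW hWf hWa hWb hv hva hvb (fun x hx => hmin hx)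
    fun x hx => (hv₂ x hx).le

theorem le_of_forall_Lfunc1d_ge {lam C : ℝ} (hab : a < b)
    (hθ : θ < 1) (hψa : 0 < ψa) (hψb : 0 < ψb) (hW : ContDiffOn ℝ 2 W (Icc a b))
    (hWf : ∀ x ∈ Ioo a b, iteratedDerivWithin 2 W (Icc a b) x = f x)
    (hWa : W a = ψa) (hWb : W b = ψb)
    (hprop : ∀ v : ℝ → ℝ, admissible1d θ a b ψa ψb v →
      Lfunc1d f a b ψa ψb v ≥ lam * (derivWithin v (Icc a b) b - derivWithin v (Icc a b) a) - C) :
    ∀ x ∈ Ioo a b, lam ≤ W x := by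
  have hθ' : θ - 1 ≠ 0 := sub_ne_zero.mpr hθ.ne
  refine le_of_forall_integral_sub_mul_le (C := C) hab hW.continuousOn
    (Real.rpow_pos_of_pos hψa (θ - 1)⁻¹) (Real.rpow_pos_of_pos hψb (θ - 1)⁻¹)
    fun g hg hgpos hga hgb => ?_
  refine integral_sub_mul_le_of_proper hab hW hWf hWa hWb hprop hg hgpos ?_ ?_
  · rw [hga, Real.rpow_inv_rpow hψa.le hθ']
  · rw [hgb, Real.rpow_inv_rpow hψb.le hθ']

end Functional

section Regularity

variable {a b : ℝ} {α : ℝ≥0} {w : ℝ → ℝ}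

theorem exists_holderOnWith_iteratedDerivWithin_two_rpow (hab : a < b) (hα : α ≤ 1)
    (hw : ContDiffOn ℝ 2 w (Icc a b)) (hpos : ∀ x ∈ Icc a b, 0 < w x)
    (hw₂ : ∃ C, HolderOnWith C α (iteratedDerivWithin 2 w (Icc a b)) (Icc a b)) (p : ℝ) :
    ∃ C, HolderOnWith C α (iteratedDerivWithin 2 (fun x => w x ^ p) (Icc a b)) (Icc a b) := by
  have hs := uniqueDiffOn_Icc hab
  set w' := derivWithin w (Icc a b)
  set w'' := iteratedDerivWithin 2 w (Icc a b)
  have hd₁ : ∀ x ∈ Icc a b, HasDerivWithinAt w (w' x) (Icc a b) x := fun x hx =>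
    (hw.differentiableOn two_ne_zero x hx).hasDerivWithinAt
  have hd₂ : ∀ x ∈ Icc a b, HasDerivWithinAt w' (w'' x) (Icc a b) x := fun x hx =>
    hw.hasDerivWithinAt_derivWithin hs hx
  have hdp : EqOn (derivWithin (fun x => w x ^ p) (Icc a b))
      (fun x => w' x * p * w x ^ (p - 1)) (Icc a b) := fun x hx =>
    ((hd₁ x hx).rpow_const (Or.inl (hpos x hx).ne')).derivWithin (hs x hx)
  have hd₂p : EqOn (iteratedDerivWithin 2 (fun x => w x ^ p) (Icc a b))
      (w'' * (fun x => p * w x ^ (p - 1)) +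
        (fun x => w' x * w' x * (p * (p - 1)) * w x ^ (p - 1 - 1))) (Icc a b) := fun x hx => by
    rw [iteratedDerivWithin_two_eq_derivWithin_derivWithin, derivWithin_congr hdp (hdp hx)]
    refine ((((hd₂ x hx).mul_const p).mul
      ((hd₁ x hx).rpow_const (Or.inl (hpos x hx).ne'))).derivWithin (hs x hx)).trans ?_
    simp only [Pi.add_apply, Pi.mul_apply]
    ring
  have hC1 : ∀ {g : ℝ → ℝ}, ContDiffOn ℝ 1 g (Icc a b) → ∃ C, HolderOnWith C α g (Icc a b) :=
    fun hg => hg.exists_holderOnWith (convex_Icc a b) isCompact_Icc hα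
  have hw' : ContDiffOn ℝ 1 w' (Icc a b) := hw.derivWithin hs le_rfl
  have hwp : ∀ q : ℝ, ContDiffOn ℝ 1 (fun x => w x ^ q) (Icc a b) := fun q =>
    (hw.of_le one_le_two).rpow_const_of_ne fun x hx => (hpos x hx).ne'
  obtain ⟨C₁, h₁⟩ :=
    exists_holderOnWith_mul (Metric.isBounded_Icc a b) hw₂ (hC1 (contDiffOn_const.mul (hwp _)))
  obtain ⟨C₂, h₂⟩ := hC1 (((hw'.mul hw').mul contDiffOn_const).mul (hwp (p - 1 - 1)))
  exact ⟨C₁ + C₂, (h₁.add h₂).congr hd₂p.symm⟩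

theorem exists_rpow_iteratedDerivWithin_two_eq {θ : ℝ} (hab : a < b) (hθ : θ < 1) (hα : α ≤ 1)
    (hw : ContDiffOn ℝ 2 w (Icc a b)) (hpos : ∀ x ∈ Icc a b, 0 < w x)
    (hw₂ : ∃ C, HolderOnWith C α (iteratedDerivWithin 2 w (Icc a b)) (Icc a b)) :
    ∃ u : ℝ → ℝ, ContDiffOn ℝ 4 u (Icc a b) ∧
      (∃ C, HolderOnWith C α (iteratedDerivWithin 4 u (Icc a b)) (Icc a b)) ∧
      (∀ x ∈ Icc a b, 0 < iteratedDerivWithin 2 u (Icc a b) x) ∧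
      EqOn (fun x => iteratedDerivWithin 2 u (Icc a b) x ^ (θ - 1)) w (Icc a b) ∧
      u a = 0 ∧ u b = 0 := by
  have hs := uniqueDiffOn_Icc hab
  have hh : ContDiffOn ℝ 2 (fun x => w x ^ (θ - 1)⁻¹) (Icc a b) :=
    hw.rpow_const_of_ne fun x hx => (hpos x hx).ne'
  obtain ⟨u, hu, hu₂, hua, hub⟩ := exists_iteratedDerivWithin_two_eq hab hh.continuousOn 0 0
  have hu₄ : ContDiffOn ℝ 4 u (Icc a b) := by
    have h := hu.of_iteratedDerivWithin_two (n := 2) hs (hh.congr hu₂)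
    norm_num at h
    exact h
  obtain ⟨C, hC⟩ := exists_holderOnWith_iteratedDerivWithin_two_rpow hab hα hw hpos hw₂ (θ - 1)⁻¹
  refine ⟨u, hu₄, ⟨C, hC.congr fun x hx => ?_⟩, fun x hx => ?_, fun x hx => ?_, hua, hub⟩
  · rw [← iteratedDerivWithin_iteratedDerivWithin 2 2, iteratedDerivWithin_congr hu₂ hx]
  · rw [hu₂ x hx]
    exact Real.rpow_pos_of_pos (hpos x hx) _
  · simp only [hu₂ x hx]
    exact Real.rpow_inv_rpow (hpos x hx).le (sub_ne_zero.mpr hθ.ne)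

end Regularity

theorem second_bvp_dim_one_iff_proper_general
    (θ : ℝ) (hθ1 : θ < 1) (α : ℝ≥0) (hα1 : α < 1)
    (a b : ℝ) (hab : a < b)
    (f : ℝ → ℝ) (hf : ∃ C : ℝ≥0, HolderOnWith C α f (Icc a b))
    (hfc : ContinuousOn f (Icc a b))
    (ψa ψb : ℝ) (hψa : 0 < ψa) (hψb : 0 < ψb) :
    (∃ u : ℝ → ℝ,
        ContDiffOn ℝ 4 u (Icc a b) ∧
        (∃ C : ℝ≥0, HolderOnWith C α (iteratedDerivWithin 4 u (Icc a b)) (Icc a b)) ∧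
        (∀ x ∈ Icc a b, 0 < iteratedDerivWithin 2 u (Icc a b) x) ∧
        (∀ x ∈ Ioo a b,
          iteratedDerivWithin 2
            (fun y => (iteratedDerivWithin 2 u (Icc a b) y) ^ (θ - 1)) (Icc a b) x = f x) ∧
        u a = 0 ∧ u b = 0 ∧
        (iteratedDerivWithin 2 u (Icc a b) a) ^ (θ - 1) = ψa ∧
        (iteratedDerivWithin 2 u (Icc a b) b) ^ (θ - 1) = ψb) ↔
    (∃ lam > (0:ℝ), ∃ C : ℝ, ∀ v : ℝ → ℝ, admissible1d θ a b ψa ψb v →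
        Lfunc1d f a b ψa ψb v ≥
          lam * (derivWithin v (Icc a b) b - derivWithin v (Icc a b) a) - C) := by
  constructor
  · rintro ⟨u, hu, -, hupos, hueq, -, -, hua, hub⟩
    refine exists_forall_Lfunc1d_ge_of_pos hab ?_ hueq hua hub
      fun x hx => Real.rpow_pos_of_pos (hupos x hx) _
    exact (hu.iteratedDerivWithin_two (uniqueDiffOn_Icc hab) (n := 2) (by norm_num)
      ).rpow_const_of_ne fun x hx => (hupos x hx).ne'
  · rintro ⟨lam, hlam, C, hprop⟩
    obtain ⟨w, hw, hw₂, hwa, hwb⟩ := exists_iteratedDerivWithin_two_eq hab hfc ψa ψb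
    have hwf : ∀ x ∈ Ioo a b, iteratedDerivWithin 2 w (Icc a b) x = f x := fun x hx =>
      hw₂ x (Ioo_subset_Icc_self hx)
    have hwpos : ∀ x ∈ Icc a b, 0 < w x := by
      intro x hx
      rcases eq_endpoints_or_mem_Ioo_of_mem_Icc hx with rfl | rfl | hx'
      exacts [hwa ▸ hψa, hwb ▸ hψb,
        hlam.trans_le (le_of_forall_Lfunc1d_ge hab hθ1 hψa hψb hw hwf hwa hwb hprop x hx')]
    obtain ⟨Cf, hCf⟩ := hf
    obtain ⟨u, hu, huH, hupos, hueq, hua, hub⟩ := exists_rpow_iteratedDerivWithin_two_eq hab hθ1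
      hα1.le hw hwpos ⟨Cf, hCf.congr fun x hx => (hw₂ x hx).symm⟩
    refine ⟨u, hu, huH, hupos, fun x hx => ?_, hua, hub,
      (hueq (left_mem_Icc.mpr hab.le)).trans hwa, (hueq (right_mem_Icc.mpr hab.le)).trans hwb⟩
    rw [iteratedDerivWithin_congr hueq (Ioo_subset_Icc_self hx)]
    exact hwf x hx

/-- In dimension one, the second boundary value problem
`((u'')^{θ-1})'' = f`, `u(a) = u(b) = 0`, `(u''(a))^{θ-1} = ψa`, `(u''(b))^{θ-1} = ψb`
is solvable in `C^{4,α}([a,b])` if and only if the functional `L` is proper. -/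
theorem second_bvp_dim_one_iff_proper
    (θ : ℝ) (hθ0 : 0 ≤ θ) (hθ1 : θ < 1) (α : ℝ≥0) (hα0 : 0 < α) (hα1 : α < 1)
    (a b : ℝ) (hab : a < b)
    (f : ℝ → ℝ) (hf : ∃ C : ℝ≥0, HolderOnWith C α f (Icc a b))
    (hfc : ContinuousOn f (Icc a b))
    (ψa ψb : ℝ) (hψa : 0 < ψa) (hψb : 0 < ψb) :
    (∃ u : ℝ → ℝ,
        ContDiffOn ℝ 4 u (Icc a b) ∧
        (∃ C : ℝ≥0, HolderOnWith C α (iteratedDerivWithin 4 u (Icc a b)) (Icc a b)) ∧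
        (∀ x ∈ Icc a b, 0 < iteratedDerivWithin 2 u (Icc a b) x) ∧
        (∀ x ∈ Ioo a b,
          iteratedDerivWithin 2
            (fun y => (iteratedDerivWithin 2 u (Icc a b) y) ^ (θ - 1)) (Icc a b) x = f x) ∧
        u a = 0 ∧ u b = 0 ∧
        (iteratedDerivWithin 2 u (Icc a b) a) ^ (θ - 1) = ψa ∧
        (iteratedDerivWithin 2 u (Icc a b) b) ^ (θ - 1) = ψb) ↔
    (∃ lam > (0:ℝ), ∃ C : ℝ, ∀ v : ℝ → ℝ, admissible1d θ a b ψa ψb v →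
        Lfunc1d f a b ψa ψb v ≥
          lam * (derivWithin v (Icc a b) b - derivWithin v (Icc a b) a) - C) :=
  second_bvp_dim_one_iff_proper_general θ hθ1 α hα1 a b hab f hf hfc ψa ψb hψa hψb
end
end

section
/- Let n ≥ 1, let A be a symmetric positive definite real n×n matrix with d = det A, let U be the adjugate (cofactor) matrix of A, and let η be a symmetric real n×n matrix. Let w : (0,∞) → (0,∞) be differentiable and satisfy w′(t) + (1−1/n)·w(t)/t ≤ 0 for all t > 0. Then (w′(d) + w(d)/d)·(trace(Uη))² − (w(d)/d)·trace(UηUη) ≤ (w′(d) + (1−1/n)·w(d)/d)·(trace(Uη))² ≤ 0. -/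
/-!
Since `A` is positive definite, so is `U = adj A = det A • A⁻¹`; writing `U = Bᵀ B`, the traces
`tr (U η)` and `tr (U η U η)` are `tr M` and `tr (M M)` for the symmetric matrix `M = B η Bᵀ`,
and Cauchy–Schwarz on the diagonal of `M` gives `tr (U η)² ≤ n tr (U η U η)`. Multiplied by
`w d / d ≥ 0` this is the first inequality; the second is condition (A1) at `t = d`.
-/

namespace Matrix

variable {ι : Type*} [Fintype ι]

theorem IsSymm.sq_diag_le_mul_self_diag {M : Matrix ι ι ℝ} (hM : M.IsSymm) (i : ι) :
    M i i ^ 2 ≤ (M * M) i i := by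
  rw [mul_apply, sq]
  refine Finset.single_le_sum (f := fun j => M i j * M j i) (fun j _ => ?_) (Finset.mem_univ i)
  simpa only [hM.apply i j] using mul_self_nonneg (M i j)

theorem IsSymm.trace_sq_le_card_mul_trace_mul_self {M : Matrix ι ι ℝ} (hM : M.IsSymm) :
    M.trace ^ 2 ≤ Fintype.card ι * (M * M).trace :=
  calc M.trace ^ 2 ≤ Fintype.card ι * ∑ i, M i i ^ 2 := sq_sum_le_card_mul_sum_sq
    _ ≤ Fintype.card ι * (M * M).trace :=
      mul_le_mul_of_nonneg_left (Finset.sum_le_sum fun i _ => hM.sq_diag_le_mul_self_diag i)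
        (Nat.cast_nonneg _)

open scoped MatrixOrder in
theorem PosSemidef.trace_mul_sq_le_card_mul_trace {P : Matrix ι ι ℝ} (hP : P.PosSemidef)
    {η : Matrix ι ι ℝ} (hη : η.IsSymm) :
    (P * η).trace ^ 2 ≤ Fintype.card ι * (P * η * P * η).trace := by
  classical
  obtain ⟨B, rfl⟩ := CStarAlgebra.nonneg_iff_eq_star_mul_self.mp hP.nonneg
  have hBη : (B * η * Bᵀ).IsSymm := by
    simp only [IsSymm, transpose_mul, transpose_transpose, hη.eq, Matrix.mul_assoc]
  have htrace : (Bᵀ * B * η).trace = (B * η * Bᵀ).trace := by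
    rw [Matrix.mul_assoc, trace_mul_comm, Matrix.mul_assoc]
  have htrace_sq : (Bᵀ * B * η * (Bᵀ * B) * η).trace = (B * η * Bᵀ * (B * η * Bᵀ)).trace := by
    rw [show Bᵀ * B * η * (Bᵀ * B) * η = Bᵀ * (B * η * Bᵀ * B * η) by
      simp only [Matrix.mul_assoc], trace_mul_comm]
    simp only [Matrix.mul_assoc]
  simp only [star_eq_conjTranspose, conjTranspose_eq_transpose_of_trivial, htrace, htrace_sq]
  exact hBη.trace_sq_le_card_mul_trace_mul_self

theorem PosDef.adjugate [DecidableEq ι] {A : Matrix ι ι ℝ} (hA : A.PosDef) :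
    A.adjugate.PosDef := by
  have : A.adjugate = A.det • A⁻¹ := by
    rw [inv_def, Ring.inverse_eq_inv', smul_smul, mul_inv_cancel₀ hA.det_pos.ne', one_smul]
  rw [this]
  exact hA.inv.smul hA.det_pos

end Matrix

theorem second_variation_integrand_nonpos_general
    (n : ℕ) (hn : 1 ≤ n)
    (A : Matrix (Fin n) (Fin n) ℝ) (hA : A.PosDef)
    (η : Matrix (Fin n) (Fin n) ℝ) (hη : η.IsSymm)
    (w : ℝ → ℝ) (hwpos : ∀ t > (0:ℝ), 0 < w t)
    (hA1 : ∀ t > (0:ℝ), deriv w t + (1 - 1 / (n : ℝ)) * w t / t ≤ 0) :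
    (deriv w A.det + w A.det / A.det) * (Matrix.trace (A.adjugate * η)) ^ 2 -
        (w A.det / A.det) * Matrix.trace (A.adjugate * η * A.adjugate * η) ≤
      (deriv w A.det + (1 - 1 / (n : ℝ)) * w A.det / A.det) *
        (Matrix.trace (A.adjugate * η)) ^ 2 ∧
    (deriv w A.det + (1 - 1 / (n : ℝ)) * w A.det / A.det) *
        (Matrix.trace (A.adjugate * η)) ^ 2 ≤ 0 := by
  have hd : 0 < A.det := hA.det_pos
  refine ⟨?_, mul_nonpos_of_nonpos_of_nonneg (hA1 _ hd) (sq_nonneg _)⟩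
  have hcauchy := hA.adjugate.posSemidef.trace_mul_sq_le_card_mul_trace hη
  rw [Fintype.card_fin] at hcauchy
  have hweight : 0 ≤ w A.det / A.det := (div_pos (hwpos _ hd) hd).le
  have hmean : w A.det / A.det * ((A.adjugate * η).trace ^ 2 / n) ≤
      w A.det / A.det * (A.adjugate * η * A.adjugate * η).trace :=
    mul_le_mul_of_nonneg_left ((div_le_iff₀' (by exact_mod_cast hn)).mpr hcauchy) hweight
  linarith [show (1 - 1 / (n : ℝ)) * w A.det / A.det * (A.adjugate * η).trace ^ 2 =
    w A.det / A.det * (A.adjugate * η).trace ^ 2 -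
      w A.det / A.det * ((A.adjugate * η).trace ^ 2 / n) by ring]

/-- The pointwise estimate on the second-variation integrand of the
Monge–Ampère functional: for `A` symmetric positive definite with `d = det A`,
`U = adj A`, `η` symmetric, and `w` differentiable positive on `(0,∞)` satisfying
condition (A1), one has
`(w'(d) + w(d)/d)(tr(Uη))² − (w(d)/d)·tr(UηUη) ≤ (w'(d) + (1−1/n)w(d)/d)(tr(Uη))² ≤ 0`. -/
theorem second_variation_integrand_nonpos
    (n : ℕ) (hn : 1 ≤ n)
    (A : Matrix (Fin n) (Fin n) ℝ) (hA : A.PosDef)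
    (η : Matrix (Fin n) (Fin n) ℝ) (hη : η.IsSymm)
    (w : ℝ → ℝ) (hwpos : ∀ t > (0:ℝ), 0 < w t)
    (hwdiff : ∀ t > (0:ℝ), DifferentiableAt ℝ w t)
    (hA1 : ∀ t > (0:ℝ), deriv w t + (1 - 1 / (n : ℝ)) * w t / t ≤ 0) :
    (deriv w A.det + w A.det / A.det) * (Matrix.trace (A.adjugate * η)) ^ 2 -
        (w A.det / A.det) * Matrix.trace (A.adjugate * η * A.adjugate * η) ≤
      (deriv w A.det + (1 - 1 / (n : ℝ)) * w A.det / A.det) *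
        (Matrix.trace (A.adjugate * η)) ^ 2 ∧
    (deriv w A.det + (1 - 1 / (n : ℝ)) * w A.det / A.det) *
        (Matrix.trace (A.adjugate * η)) ^ 2 ≤ 0 :=
  second_variation_integrand_nonpos_general n hn A hA η hη w hwpos hA1
end

section
/- Let n ≥ 1 and let Ω ⊂ ℝⁿ be a nonempty bounded convex open set. Let u : Ω̄ → ℝ be convex and continuous on Ω̄ and differentiable at a point x ∈ ∂Ω. Let ν be a unit vector such that ⟨y − x, ν⟩ ≤ 0 for all y ∈ Ω̄ (an outer normal direction at x), and assume ⟨∇u(x), ν⟩ ≥ 0. Then ⟨∇u(x), ν⟩ ≥ (u(x) − inf_Ω u)/diam(Ω) − ‖∇u(x) − ⟨∇u(x), ν⟩ν‖. -/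
open scoped RealInnerProductSpace
open Set Metric

noncomputable section

theorem aux_subgrad {E : Type*} [NormedAddCommGroup E] [NormedSpace ℝ E]
    {S : Set E} (hS : Convex ℝ S) {u : E → ℝ} (hu : ConvexOn ℝ S u)
    {x : E} (hxS : x ∈ S) {g : E →L[ℝ] ℝ} (hg : HasFDerivWithinAt u g S x)
    {y : E} (hyS : y ∈ S) : g (y - x) ≤ u y - u x := by
  set L : ℝ →ᵃ[ℝ] E := AffineMap.lineMap x y with hL
  have hLmap : ∀ t ∈ Icc (0:ℝ) 1, L t ∈ S := by
    intro t ht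
    rw [hL, AffineMap.lineMap_apply_module]
    exact hS hxS hyS (by linarith [ht.2]) ht.1 (by ring)
  have hφcvx : ConvexOn ℝ (Icc (0:ℝ) 1) (u ∘ L) :=
    (hu.comp_affineMap L).subset (fun t ht => hLmap t ht) (convex_Icc 0 1)
  have hLd : HasDerivWithinAt (fun t : ℝ => L t) (y - x) (Icc (0:ℝ) 1) 0 := by
    have h : HasDerivAt (fun t : ℝ => t • (y - x) + x) (y - x) 0 := by
      simpa using (((hasDerivAt_id (0:ℝ)).smul_const (y - x)).add_const x)
    have heq : (fun t : ℝ => L t) = fun t : ℝ => t • (y - x) + x := by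
      funext t; rw [hL, AffineMap.lineMap_apply_module]; module
    rw [heq]; exact h.hasDerivWithinAt
  have hφd : HasDerivWithinAt (u ∘ L) (g (y - x)) (Icc (0:ℝ) 1) 0 :=
    hg.comp_hasDerivWithinAt_of_eq 0 hLd (fun t ht => hLmap t ht)
      (by rw [hL]; simp)
  have h := hφcvx.le_slope_of_hasDerivWithinAt (by simp) (by simp) one_pos hφd
  have hs : slope (u ∘ L) 0 1 = u y - u x := by
    simp [slope_def_field, hL, Function.comp]
  rw [hs] at h; exact h

/-- Lower bound for the outward normal derivative of a convex function:
if `u` is convex and continuous on `Ω̄`, differentiable at `x ∈ ∂Ω` (within `Ω̄`, with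
derivative `g`), `ν` is an outer unit normal at `x` and `⟨∇u(x), ν⟩ ≥ 0`, then
`⟨∇u(x), ν⟩ ≥ (u(x) − inf_Ω u)/diam(Ω) − ‖∇u(x) − ⟨∇u(x), ν⟩ν‖`. -/
theorem convex_normal_derivative_lower_bound
    (n : ℕ) (hn : 1 ≤ n)
    (Ω : Set (EuclideanSpace ℝ (Fin n))) (hne : Ω.Nonempty)
    (hΩo : IsOpen Ω) (hΩb : Bornology.IsBounded Ω) (hΩc : Convex ℝ Ω)
    (u : EuclideanSpace ℝ (Fin n) → ℝ)
    (hucvx : ConvexOn ℝ (closure Ω) u) (hucont : ContinuousOn u (closure Ω))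
    (x : EuclideanSpace ℝ (Fin n)) (hx : x ∈ frontier Ω)
    (g : EuclideanSpace ℝ (Fin n) →L[ℝ] ℝ)
    (hg : HasFDerivWithinAt u g (closure Ω) x)
    (ν : EuclideanSpace ℝ (Fin n)) (hν : ‖ν‖ = 1)
    (houter : ∀ y ∈ closure Ω, ⟪y - x, ν⟫ ≤ 0)
    (hpos : 0 ≤ g ν) :
    (u x - sInf (u '' Ω)) / diam Ω -
        ‖(InnerProductSpace.toDual ℝ (EuclideanSpace ℝ (Fin n))).symm g - g ν • ν‖ ≤
      g ν := by
  set G : EuclideanSpace ℝ (Fin n) :=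
    (InnerProductSpace.toDual ℝ (EuclideanSpace ℝ (Fin n))).symm g with hG
  set T : EuclideanSpace ℝ (Fin n) := G - g ν • ν with hT
  have hxcl : x ∈ closure Ω := hx.1
  have hbd : Bornology.IsBounded (closure Ω) := hΩb.closure
  -- diam Ω > 0
  have hdiam : 0 < diam Ω := by
    obtain ⟨z, hz⟩ := hne
    obtain ⟨ε, hε, hball⟩ := Metric.isOpen_iff.mp hΩo z hz
    have hz2 : z + (ε/2) • ν ∈ Ω := by
      apply hball
      rw [mem_ball, dist_eq_norm]
      have : z + (ε/2) • ν - z = (ε/2) • ν := by abel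
      rw [this, norm_smul, hν, mul_one, Real.norm_eq_abs, abs_of_pos (by positivity : (0:ℝ) < ε/2)]
      linarith
    have h1 : dist z (z + (ε/2) • ν) ≤ diam Ω := dist_le_diam_of_mem hΩb hz hz2
    have h2 : dist z (z + (ε/2) • ν) = ε/2 := by
      rw [dist_eq_norm]
      have : z - (z + (ε/2) • ν) = -((ε/2) • ν) := by abel
      rw [this, norm_neg, norm_smul, hν, mul_one, Real.norm_eq_abs,
        abs_of_pos (by positivity : (0:ℝ) < ε/2)]
    linarith
  -- key bound for every y ∈ Ω
  have key : ∀ y ∈ Ω, u x - (g ν + ‖T‖) * diam Ω ≤ u y := by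
    intro y hy
    have hycl : y ∈ closure Ω := subset_closure hy
    have hsub : g (y - x) ≤ u y - u x :=
      aux_subgrad hΩc.closure hucvx hxcl hg hycl
    -- g (y - x) = ⟪G, y - x⟫
    have hGinner : ∀ v : EuclideanSpace ℝ (Fin n), g v = ⟪G, v⟫ := fun v =>
      (InnerProductSpace.toDual_symm_apply).symm
    have hdecomp : ⟪G, x - y⟫ = g ν * ⟪ν, x - y⟫ + ⟪T, x - y⟫ := by
      rw [hT]
      rw [inner_sub_left, inner_smul_left]
      ring_nf
      simp [RCLike.star_def]
      ring
    have hdist : ‖x - y‖ ≤ diam Ω := by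
      rw [← dist_eq_norm]
      simpa [diam_closure] using dist_le_diam_of_mem hbd hxcl hycl
    have h1 : ⟪ν, x - y⟫ ≤ diam Ω := by
      calc ⟪ν, x - y⟫ ≤ ‖ν‖ * ‖x - y‖ := real_inner_le_norm ν (x - y)
        _ ≤ diam Ω := by rw [hν, one_mul]; exact hdist
    have h0 : (0:ℝ) ≤ ⟪ν, x - y⟫ := by
      have := houter y hycl
      rw [real_inner_comm] at this
      have : ⟪ν, x - y⟫ = -⟪ν, y - x⟫ := by
        rw [← inner_neg_right]; congr 1; abel
      linarith [houter y hycl, (real_inner_comm (y - x) ν ▸ (houter y hycl))]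
    have h2 : ⟪T, x - y⟫ ≤ ‖T‖ * diam Ω := by
      calc ⟪T, x - y⟫ ≤ ‖T‖ * ‖x - y‖ := real_inner_le_norm T (x - y)
        _ ≤ ‖T‖ * diam Ω := by
            exact mul_le_mul_of_nonneg_left hdist (norm_nonneg T)
    have h3 : g ν * ⟪ν, x - y⟫ ≤ g ν * diam Ω :=
      mul_le_mul_of_nonneg_left h1 hpos
    have hgxy : g (x - y) ≤ (g ν + ‖T‖) * diam Ω := by
      rw [hGinner, hdecomp]; nlinarith
    have : -(g (x - y)) ≤ u y - u x := by
      have : g (y - x) = -(g (x - y)) := by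
        rw [← map_neg]; congr 1; abel
      linarith [hsub, this ▸ hsub]
    linarith
  -- infimum bound
  have hinf : u x - (g ν + ‖T‖) * diam Ω ≤ sInf (u '' Ω) := by
    apply le_csInf (hne.image u)
    rintro b ⟨y, hy, rfl⟩
    exact key y hy
  rw [sub_le_iff_le_add, div_le_iff₀ hdiam]
  nlinarith [hinf, norm_nonneg T]
end
end
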